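/- For J-periodic sequences V, W, U, with ψ(V,W)_i = −(2V_{i-1} + V_i)W_{i-1} + (V_{i+1} − V_{i-1})W_i + (2V_{i+1} + V_i)W_{i+1}, one has (ψ(V,W), U)_h = −h·∑_{i=1}^J [V_i(W_{i+1} + 2W_i) + V_{i+1}(2W_{i+1} + W_i)]·(U_{i+1} − U_i). -/
import Mathlib

lemma shift_sum (J : ℕ) (hJ : 1 ≤ J) (f : ℤ → ℝ) (hf : ∀ i : ℤ, f (i + J) = f i) :
    ∑ i ∈ Finset.range J, f ((i : ℤ) + 1) = ∑ i ∈ Finset.range J, f (i : ℤ) := by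
  obtain ⟨K, rfl⟩ : ∃ K, J = K + 1 := ⟨J - 1, (Nat.succ_pred_eq_of_pos hJ).symm⟩
  rw [Finset.sum_range_succ, Finset.sum_range_succ' (fun i => f (i : ℤ))]
  have h0 : f ((K : ℤ) + 1) = f 0 := by
    have := hf 0
    push_cast at this ⊢
    rw [← this]
    ring_nf
  rw [h0]
  push_cast
  rfl

theorem stmt_5 (J : ℕ) (hJ : 1 ≤ J) (h : ℝ) (hh : 0 < h)
    (V W U : ℤ → ℝ) (hV : ∀ i : ℤ, V (i + J) = V i) (hW : ∀ i : ℤ, W (i + J) = W i)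
    (hU : ∀ i : ℤ, U (i + J) = U i) :
    h * ∑ i ∈ Finset.range J,
        (-(2 * V ((i : ℤ) - 1) + V (i : ℤ)) * W ((i : ℤ) - 1)
          + (V ((i : ℤ) + 1) - V ((i : ℤ) - 1)) * W (i : ℤ)
          + (2 * V ((i : ℤ) + 1) + V (i : ℤ)) * W ((i : ℤ) + 1)) * U (i : ℤ)
      = -(h * ∑ i ∈ Finset.range J,
          (V (i : ℤ) * (W ((i : ℤ) + 1) + 2 * W (i : ℤ))
            + V ((i : ℤ) + 1) * (2 * W ((i : ℤ) + 1) + W (i : ℤ))) *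
            (U ((i : ℤ) + 1) - U (i : ℤ))) := by
  set G : ℤ → ℝ := fun i => V i * (W (i + 1) + 2 * W i) + V (i + 1) * (2 * W (i + 1) + W i)
    with hGdef
  have hG : ∀ i : ℤ, G (i + J) = G i := by
    intro i
    simp only [hGdef]
    rw [show i + (J : ℤ) + 1 = (i + 1) + J by ring]
    simp only [hV, hW]
  set H : ℤ → ℝ := fun i => G (i - 1) * U i with hHdef
  have hH : ∀ i : ℤ, H (i + J) = H i := by
    intro i
    simp only [hHdef]
    rw [show i + (J : ℤ) - 1 = (i - 1) + J by ring, hG, hU]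
  have key : ∀ i : ℤ,
      (-(2 * V (i - 1) + V i) * W (i - 1) + (V (i + 1) - V (i - 1)) * W i
        + (2 * V (i + 1) + V i) * W (i + 1)) * U i
        + G i * (U (i + 1) - U i) = H (i + 1) - H i := by
    intro i
    simp only [hGdef, hHdef, add_sub_cancel_right]
    ring
  have hsum : (∑ i ∈ Finset.range J,
      (-(2 * V ((i : ℤ) - 1) + V (i : ℤ)) * W ((i : ℤ) - 1)
        + (V ((i : ℤ) + 1) - V ((i : ℤ) - 1)) * W (i : ℤ)
        + (2 * V ((i : ℤ) + 1) + V (i : ℤ)) * W ((i : ℤ) + 1)) * U (i : ℤ))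
      + ∑ i ∈ Finset.range J, G (i : ℤ) * (U ((i : ℤ) + 1) - U (i : ℤ)) = 0 := by
    rw [← Finset.sum_add_distrib]
    have : ∀ i ∈ Finset.range J,
        (-(2 * V ((i : ℤ) - 1) + V (i : ℤ)) * W ((i : ℤ) - 1)
          + (V ((i : ℤ) + 1) - V ((i : ℤ) - 1)) * W (i : ℤ)
          + (2 * V ((i : ℤ) + 1) + V (i : ℤ)) * W ((i : ℤ) + 1)) * U (i : ℤ)
          + G (i : ℤ) * (U ((i : ℤ) + 1) - U (i : ℤ)) = H ((i : ℤ) + 1) - H (i : ℤ) := by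
      intro i _
      exact key i
    rw [Finset.sum_congr rfl this, Finset.sum_sub_distrib,
      shift_sum J hJ H hH, sub_self]
  have h2 : ∑ i ∈ Finset.range J, G (i : ℤ) * (U ((i : ℤ) + 1) - U (i : ℤ))
      = ∑ i ∈ Finset.range J,
          (V (i : ℤ) * (W ((i : ℤ) + 1) + 2 * W (i : ℤ))
            + V ((i : ℤ) + 1) * (2 * W ((i : ℤ) + 1) + W (i : ℤ))) *
            (U ((i : ℤ) + 1) - U (i : ℤ)) := rfl
  rw [h2] at hsum
  nlinarith [hsum]
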